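/- arXiv:2101.12197 — 3 statements merged into one kernel-verified Lean document; each statement's English description precedes it below -/
import Mathlib

section
/- Let (V, ω) be a finite-dimensional symplectic vector space over ℝ, let G be a group of linear automorphisms of V, and let N ≤ G be a finite-index subgroup acting on a nonzero subspace W ⊆ V with N·W ⊆ W. Suppose v ∈ V is such that the transvection T(v) : x ↦ x + ω(x, v)·v belongs to G, and suppose there exists w ∈ W with ω(v, w) ≠ 0. Then v ∈ W. -/
/-!
Since `ω(v, v) = 0`, the transvection `T` fixes `v`, so its powers are `T ^ n x = x + n ω(x, v) v`.
Some power `T ^ n` with `n > 0` lies in `N` and hence preserves `W`; applied to `w`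
this puts `n ω(w, v) • v` in `W`, and `ω(w, v) = -ω(v, w) ≠ 0`.
-/

theorem LinearEquiv.pow_apply_eq_add_nsmul_of_apply_eq_add_smul {R M : Type*} [Semiring R]
    [AddCommMonoid M] [Module R M] {f : M →ₗ[R] R} {v : M} (hfv : f v = 0) {T : M ≃ₗ[R] M}
    (hT : ∀ x, T x = x + f x • v) (n : ℕ) (x : M) :
    (T ^ n) x = x + n • f x • v := by
  induction n with
  | zero => simp
  | succ n ih =>
    rw [pow_succ', LinearEquiv.mul_apply, ih, hT, map_add, map_nsmul, f.map_smul, hfv, smul_zero,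
      nsmul_zero, add_zero, succ_nsmul, add_assoc]

theorem transvection_vector_mem_invariant_subspace_general
    (V : Type*) [AddCommGroup V] [Module ℝ V]
    (ω : LinearMap.BilinForm ℝ V) (hω : ω.IsAlt)
    (G N : Subgroup (V ≃ₗ[ℝ] V)) (hfi : N.relIndex G ≠ 0)
    (W : Submodule ℝ V)
    (hinv : ∀ g ∈ N, ∀ w ∈ W, g w ∈ W)
    (v : V) (T : V ≃ₗ[ℝ] V) (hTG : T ∈ G)
    (hT : ∀ x : V, T x = x + ω x v • v)
    (w : V) (hwW : w ∈ W) (hvw : ω v w ≠ 0) :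
    v ∈ W := by
  obtain ⟨n, hn, -, hTn, -⟩ := Subgroup.exists_pow_mem_of_relIndex_ne_zero hfi hTG
  have hwv : ω w v ≠ 0 := by
    rwa [← neg_ne_zero, LinearMap.IsAlt.neg hω]
  have hTnw : w + n • ω w v • v ∈ W := by
    convert hinv _ hTn w hwW using 1
    exact (LinearEquiv.pow_apply_eq_add_nsmul_of_apply_eq_add_smul
      (f := ω.flip v) (hω v) hT n w).symm
  rwa [add_mem_cancel_left hwW, ← Nat.cast_smul_eq_nsmul ℝ, smul_smul,
    W.smul_mem_iff (mul_ne_zero (Nat.cast_ne_zero.mpr hn.ne') hwv)] at hTnw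

/-- If a finite-index subgroup `N` of `G ≤ GL(V)` preserves a nonzero subspace
`W`, the transvection `T(v)` lies in `G`, and some `w ∈ W` has `ω(v,w) ≠ 0`,
then `v ∈ W`. -/
theorem transvection_vector_mem_invariant_subspace
    (V : Type*) [AddCommGroup V] [Module ℝ V] [FiniteDimensional ℝ V]
    (ω : LinearMap.BilinForm ℝ V) (hω : ω.IsAlt) (hnd : ω.Nondegenerate)
    (G N : Subgroup (V ≃ₗ[ℝ] V)) (hNG : N ≤ G) (hfi : N.relIndex G ≠ 0)
    (W : Submodule ℝ V) (hW : W ≠ ⊥)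
    (hinv : ∀ g ∈ N, ∀ w ∈ W, g w ∈ W)
    (v : V) (T : V ≃ₗ[ℝ] V) (hTG : T ∈ G)
    (hT : ∀ x : V, T x = x + ω x v • v)
    (w : V) (hwW : w ∈ W) (hvw : ω v w ≠ 0) :
    v ∈ W :=
  transvection_vector_mem_invariant_subspace_general V ω hω G N hfi W hinv v T hTG hT w hwW hvw
end

section
/- Let (V, ω) be a finite-dimensional real symplectic vector space and G ≤ GL(V) a group preserving ω. Let B ⊆ V be a finite set such that: (i) B spans V; (ii) for any u ≠ u' in B there exists a chain u = u₀, u₁, …, u_k = u' of elements of B with ω(u_j, u_{j+1}) ≠ 0 for all 0 ≤ j ≤ k−1; and (iii) the transvection T(u) : x ↦ x + ω(x, u)·u lies in G for every u ∈ B. Then the action of G on V is strongly irreducible: no finite-index subgroup of G preserves a nonzero proper subspace of V. -/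
/-!
If `W` is preserved by a finite-index subgroup of `G`, then for each `u ∈ B` some power
`T(u)ⁿ = (x ↦ x + n ω(x, u) u)`, `n ≠ 0`, preserves `W`; hence `u ∈ W` as soon as some `w ∈ W`
has `ω(w, u) ≠ 0`. A nonzero `w ∈ W` pairs nontrivially with some `u ∈ B` since `B` spans and
`ω` is nondegenerate, and the chains then carry membership in `W` to all of `B`.
-/

namespace LinearMap.BilinForm

variable {R K V : Type*} [AddCommGroup V]

theorem transvection_pow_apply [CommRing R] [Module R V] {ω : LinearMap.BilinForm R V} (hω : ω.IsAlt)
    {T : V ≃ₗ[R] V} {u : V} (hT : ∀ x, T x = x + ω x u • u) (n : ℕ) (x : V) :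
    (T ^ n) x = x + (n * ω x u) • u := by
  induction n with
  | zero => simp
  | succ n ih =>
    rw [pow_succ', LinearEquiv.mul_apply, ih, hT, map_add, map_smul, LinearMap.add_apply,
      LinearMap.smul_apply, hω u, smul_zero, add_zero, Nat.cast_succ]
    module

variable [Field K] [Module K V] {ω : LinearMap.BilinForm K V}

theorem mem_of_transvection_pow_invariant [CharZero K] (hω : ω.IsAlt) {T : V ≃ₗ[K] V} {u : V}
    (hT : ∀ x, T x = x + ω x u • u) {n : ℕ} (hn : n ≠ 0) {W : Submodule K V}
    (hW : ∀ w ∈ W, (T ^ n) w ∈ W) {w : V} (hw : w ∈ W) (hwu : ω w u ≠ 0) : u ∈ W := by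
  have hdiff : (T ^ n) w - w ∈ W := W.sub_mem (hW w hw) hw
  rw [transvection_pow_apply hω hT, add_sub_cancel_left] at hdiff
  exact (W.smul_mem_iff (mul_ne_zero (Nat.cast_ne_zero.mpr hn) hwu)).mp hdiff

theorem exists_apply_ne_zero_of_span_eq_top (hω : ω.SeparatingLeft) {B : Set V}
    (hspan : Submodule.span K B = ⊤) {w : V} (hw : w ≠ 0) : ∃ u ∈ B, ω w u ≠ 0 := by
  by_contra! h
  have hker : Submodule.span K B ≤ LinearMap.ker (ω w) := Submodule.span_le.mpr h
  rw [hspan, top_le_iff, LinearMap.ker_eq_top] at hker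
  exact hw (hω w fun y => by rw [hker, LinearMap.zero_apply])

theorem mem_of_chain {B : Set V} {W : Submodule K V}
    (hreach : ∀ u ∈ B, ∀ w ∈ W, ω w u ≠ 0 → u ∈ W) {k : ℕ} {c : ℕ → V} (hc0 : c 0 ∈ W)
    (hcB : ∀ j ≤ k, c j ∈ B) (hcω : ∀ j < k, ω (c j) (c (j + 1)) ≠ 0) : c k ∈ W := by
  induction k with
  | zero => exact hc0
  | succ k ih =>
    exact hreach _ (hcB _ le_rfl) _ (ih (fun j hj => hcB j (hj.trans k.le_succ))
      (fun j hj => hcω j (hj.trans k.lt_succ_self))) (hcω k k.lt_succ_self)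

end LinearMap.BilinForm

open LinearMap.BilinForm

open scoped Classical in
theorem strongly_irreducible_of_transvections_general
    (V : Type*) [AddCommGroup V] [Module ℝ V]
    (ω : LinearMap.BilinForm ℝ V) (hω : ω.IsAlt) (hnd : ω.Nondegenerate)
    (G : Subgroup (V ≃ₗ[ℝ] V))
    (B : Finset V)
    (hspan : Submodule.span ℝ (B : Set V) = ⊤)
    (hchain : ∀ u ∈ B, ∀ u' ∈ B, u ≠ u' →
      ∃ (k : ℕ) (c : ℕ → V), c 0 = u ∧ c k = u' ∧ (∀ j ≤ k, c j ∈ B) ∧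
        ∀ j < k, ω (c j) (c (j + 1)) ≠ 0)
    (htrans : ∀ u ∈ B, ∃ T : V ≃ₗ[ℝ] V, T ∈ G ∧ ∀ x : V, T x = x + ω x u • u) :
    ∀ N : Subgroup (V ≃ₗ[ℝ] V), N ≤ G → N.relIndex G ≠ 0 →
      ∀ W : Submodule ℝ V, (∀ g ∈ N, ∀ w ∈ W, g w ∈ W) → W = ⊥ ∨ W = ⊤ := by
  intro N _ hfin W hW
  refine or_iff_not_imp_left.mpr fun hW0 => ?_
  have hreach : ∀ u ∈ B, ∀ w ∈ W, ω w u ≠ 0 → u ∈ W := by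
    intro u hu w hw hwu
    obtain ⟨T, hTG, hT⟩ := htrans u hu
    obtain ⟨n, hn, -, hTn⟩ := Subgroup.exists_pow_mem_of_relIndex_ne_zero hfin hTG
    exact mem_of_transvection_pow_invariant hω hT hn.ne' (hW _ hTn.1) hw hwu
  obtain ⟨w, hw, hw0⟩ := W.exists_mem_ne_zero_of_ne_bot hW0
  obtain ⟨u, hu, hwu⟩ := exists_apply_ne_zero_of_span_eq_top hnd.1 hspan hw0
  have huW : u ∈ W := hreach u hu w hw hwu
  have hBW : ∀ u' ∈ B, u' ∈ W := by
    intro u' hu'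
    rcases eq_or_ne u u' with rfl | hne
    · exact huW
    obtain ⟨k, c, hc0, rfl, hcB, hcω⟩ := hchain u hu u' hu' hne
    exact mem_of_chain hreach (hc0 ▸ huW) hcB hcω
  rw [eq_top_iff, ← hspan, Submodule.span_le]
  exact hBW

open scoped Classical in
/-- The strong irreducibility criterion: if a finite set `B` spans `V`, any two
elements of `B` are connected by a chain of pairwise `ω`-non-orthogonal
elements of `B`, and every transvection along an element of `B` lies in `G`,
then no finite-index subgroup of `G` preserves a nonzero proper subspace. -/
theorem strongly_irreducible_of_transvections
    (V : Type*) [AddCommGroup V] [Module ℝ V] [FiniteDimensional ℝ V]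
    (ω : LinearMap.BilinForm ℝ V) (hω : ω.IsAlt) (hnd : ω.Nondegenerate)
    (G : Subgroup (V ≃ₗ[ℝ] V))
    (hGω : ∀ g ∈ G, ∀ x y : V, ω (g x) (g y) = ω x y)
    (B : Finset V)
    (hspan : Submodule.span ℝ (B : Set V) = ⊤)
    (hchain : ∀ u ∈ B, ∀ u' ∈ B, u ≠ u' →
      ∃ (k : ℕ) (c : ℕ → V), c 0 = u ∧ c k = u' ∧ (∀ j ≤ k, c j ∈ B) ∧
        ∀ j < k, ω (c j) (c (j + 1)) ≠ 0)
    (htrans : ∀ u ∈ B, ∃ T : V ≃ₗ[ℝ] V, T ∈ G ∧ ∀ x : V, T x = x + ω x u • u) :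
    ∀ N : Subgroup (V ≃ₗ[ℝ] V), N ≤ G → N.relIndex G ≠ 0 →
      ∀ W : Submodule ℝ V, (∀ g ∈ N, ∀ w ∈ W, g w ∈ W) → W = ⊥ ∨ W = ⊤ :=
  strongly_irreducible_of_transvections_general V ω hω hnd G B hspan hchain htrans
end

section
/- The polynomial P(t) = t⁴ + 10t³ + 22t² + 10t + 1 has four distinct real roots, all of distinct absolute values, and is irreducible over ℚ. -/
/-!
`P` is palindromic: `P(t) = t² Q(t + 1/t)` with `Q(u) = u² + 10u + 20`, whose roots `-5 ± √5`
are both `< -2`. Hence `P = (t² - u₁t + 1)(t² - u₂t + 1)` with `u₂ = -5 - √5 < u₁ = -5 + √5`,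
and each factor has two negative reciprocal roots, one below `-1` and one in `(-1, 0)`. The root
below `-1` increases with `u`, so its reciprocal decreases, and the four roots are strictly
ordered and negative, hence of distinct absolute values.

By Gauss's lemma, irreducibility may be checked over `ℤ`. A rational root would be `±1`, and a
factorization into monic quadratics `(t² + at + b)(t² + ct + d)` forces `bd = 1`, so `b = d = ±1`;
`b = d = -1` contradicts the linear coefficient, and `b = d = 1` gives `a + c = 10`, `ac = 20`,
i.e. `(a - 5)² = 5`.
-/

open Polynomial

lemma Polynomial.Monic.eq_X_sq_add_C_mul_X_add_C {R : Type*} [CommRing R] {p : R[X]}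
    (hp : p.Monic) (h : p.natDegree = 2) : p = X ^ 2 + C (p.coeff 1) * X + C (p.coeff 0) := by
  have h2 : p.coeff 2 = 1 := h ▸ hp.coeff_natDegree
  conv_lhs => rw [p.as_sum_range_C_mul_X_pow, h]
  simp only [Finset.sum_range_succ, Finset.sum_range_zero, h2, C_1]
  ring

namespace ReciprocalQuadratic

/- The roots of `X² - u X + 1`, real when `4 ≤ u²` (below that, `Real.sqrt` returns `0`). -/
noncomputable def lowerRoot (u : ℝ) : ℝ := (u - √(u ^ 2 - 4)) / 2

noncomputable def upperRoot (u : ℝ) : ℝ := (u + √(u ^ 2 - 4)) / 2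

variable {u v : ℝ}

lemma lowerRoot_mul_upperRoot (hu : 4 ≤ u ^ 2) : lowerRoot u * upperRoot u = 1 := by
  have hsq : √(u ^ 2 - 4) ^ 2 = u ^ 2 - 4 := Real.sq_sqrt (by linarith)
  unfold lowerRoot upperRoot
  linear_combination -hsq / 4

lemma X_sq_sub_C_mul_X_add_one_eq (hu : 4 ≤ u ^ 2) :
    (X ^ 2 - C u * X + 1 : ℝ[X]) = (X - C (lowerRoot u)) * (X - C (upperRoot u)) := by
  have hsum : lowerRoot u + upperRoot u = u := by unfold lowerRoot upperRoot; ring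
  calc (X ^ 2 - C u * X + 1 : ℝ[X])
      = X ^ 2 - C (lowerRoot u + upperRoot u) * X + C (lowerRoot u * upperRoot u) := by
        rw [hsum, lowerRoot_mul_upperRoot hu, C_1]
    _ = (X - C (lowerRoot u)) * (X - C (upperRoot u)) := by rw [C_add, C_mul]; ring

lemma lowerRoot_neg (hu : u < 0) : lowerRoot u < 0 := by
  unfold lowerRoot
  linarith [Real.sqrt_nonneg (u ^ 2 - 4)]

lemma lowerRoot_lt_upperRoot (hu : 4 < u ^ 2) : lowerRoot u < upperRoot u := by
  unfold lowerRoot upperRoot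
  linarith [Real.sqrt_pos.2 (sub_pos.2 hu)]

lemma lowerRoot_lt_lowerRoot (hvu : v < u) (hu : u ≤ 0) : lowerRoot v < lowerRoot u := by
  have : √(u ^ 2 - 4) ≤ √(v ^ 2 - 4) := Real.sqrt_le_sqrt (by nlinarith)
  unfold lowerRoot
  linarith

lemma upperRoot_eq_inv (hu : 4 ≤ u ^ 2) : upperRoot u = (lowerRoot u)⁻¹ :=
  eq_inv_of_mul_eq_one_right (lowerRoot_mul_upperRoot hu)

lemma upperRoot_neg (hu : u ≤ -2) : upperRoot u < 0 := by
  rw [upperRoot_eq_inv (by nlinarith)]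
  exact inv_lt_zero.2 (lowerRoot_neg (by linarith))

lemma upperRoot_lt_upperRoot (hvu : v < u) (hu : u ≤ -2) : upperRoot u < upperRoot v := by
  have hlower := lowerRoot_lt_lowerRoot hvu (by linarith)
  have hneg := lowerRoot_neg (u := u) (by linarith)
  rw [upperRoot_eq_inv (by nlinarith), upperRoot_eq_inv (by nlinarith)]
  exact (inv_lt_inv_of_neg hneg (hlower.trans hneg)).2 hlower

end ReciprocalQuadratic

open ReciprocalQuadratic

lemma quartic_eq_mul_of_add_eq_of_mul_eq {R : Type*} [CommRing R] {u v : R} (hsum : u + v = -10)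
    (hprod : u * v = 20) :
    (X ^ 4 + 10 * X ^ 3 + 22 * X ^ 2 + 10 * X + 1 : R[X]) =
      (X ^ 2 - C u * X + 1) * (X ^ 2 - C v * X + 1) := by
  calc (X ^ 4 + 10 * X ^ 3 + 22 * X ^ 2 + 10 * X + 1 : R[X])
      = X ^ 4 - C (u + v) * X ^ 3 + (C (u * v) + 2) * X ^ 2 - C (u + v) * X + 1 := by
        rw [hsum, hprod, C_neg, C_ofNat, C_ofNat]; ring
    _ = (X ^ 2 - C u * X + 1) * (X ^ 2 - C v * X + 1) := by rw [C_add, C_mul]; ring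

lemma neg_five_sub_sqrt_five_lt : -5 - √5 < -5 + √5 := by
  linarith [Real.sqrt_pos.2 (by norm_num : (0 : ℝ) < 5)]

lemma neg_five_add_sqrt_five_lt : -5 + √5 < -2 := by
  linarith [(Real.sqrt_lt' (by norm_num : (0 : ℝ) < 3)).2 (by norm_num : (5 : ℝ) < 3 ^ 2)]

noncomputable def quarticRoots : Fin 4 → ℝ :=
  ![lowerRoot (-5 - √5), lowerRoot (-5 + √5), upperRoot (-5 + √5), upperRoot (-5 - √5)]

lemma map_quartic_eq_prod_quarticRoots :
    map (algebraMap ℚ ℝ) (X ^ 4 + 10 * X ^ 3 + 22 * X ^ 2 + 10 * X + 1 : ℚ[X]) =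
      ∏ i : Fin 4, (X - C (quarticRoots i)) := by
  have h5 : √5 ^ 2 = 5 := Real.sq_sqrt (by norm_num)
  have hu := neg_five_add_sqrt_five_lt
  have hv := neg_five_sub_sqrt_five_lt.trans hu
  have hmap : map (algebraMap ℚ ℝ) (X ^ 4 + 10 * X ^ 3 + 22 * X ^ 2 + 10 * X + 1 : ℚ[X]) =
      X ^ 4 + 10 * X ^ 3 + 22 * X ^ 2 + 10 * X + 1 := by
    simp
  rw [hmap, quartic_eq_mul_of_add_eq_of_mul_eq (u := -5 + √5) (v := -5 - √5) (by ring)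
      (by linear_combination -h5),
    X_sq_sub_C_mul_X_add_one_eq (by nlinarith), X_sq_sub_C_mul_X_add_one_eq (by nlinarith),
    Fin.prod_univ_four]
  simp only [quarticRoots, Matrix.cons_val]
  ring

lemma quarticRoots_strictMono : StrictMono quarticRoots := by
  have hu := neg_five_add_sqrt_five_lt
  have hvu := neg_five_sub_sqrt_five_lt
  refine Fin.strictMono_iff_lt_succ.2 fun i => ?_
  fin_cases i
  · exact lowerRoot_lt_lowerRoot hvu (by linarith)
  · exact lowerRoot_lt_upperRoot (by nlinarith)
  · exact upperRoot_lt_upperRoot hvu hu.le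

lemma quarticRoots_neg (i : Fin 4) : quarticRoots i < 0 :=
  (quarticRoots_strictMono.monotone (Fin.le_last i)).trans_lt
    (upperRoot_neg (neg_five_sub_sqrt_five_lt.trans neg_five_add_sqrt_five_lt).le)

lemma quartic_int_ne_zero (a : ℤ) : a ^ 4 + 10 * a ^ 3 + 22 * a ^ 2 + 10 * a + 1 ≠ 0 := by
  intro h
  have hunit : a * -(a ^ 3 + 10 * a ^ 2 + 22 * a + 10) = 1 := by linear_combination -h
  rcases Int.eq_one_or_neg_one_of_mul_eq_one hunit with rfl | rfl <;> norm_num at h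

lemma quartic_int_ne_quadratic_mul_quadratic (a b c d : ℤ) :
    (X ^ 2 + C a * X + C b) * (X ^ 2 + C c * X + C d) ≠
      (X ^ 4 + 10 * X ^ 3 + 22 * X ^ 2 + 10 * X + 1 : ℤ[X]) := by
  intro h
  have hdiff : C (a + c - 10) * X ^ 3 + C (b + d + a * c - 22) * X ^ 2 +
      C (a * d + b * c - 10) * X + C (b * d - 1) = 0 := by
    rw [← sub_eq_zero.2 h]
    simp only [C_add, C_sub, C_mul, C_1, C_ofNat]
    ring
  have hcoeff (n : ℕ) := congrArg (coeff · n) hdiff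
  simp only [coeff_add, coeff_C_mul_X_pow, coeff_C_mul_X, coeff_C, coeff_zero] at hcoeff
  have h0 := hcoeff 0
  have h1 := hcoeff 1
  have h2 := hcoeff 2
  have h3 := hcoeff 3
  norm_num at h0 h1 h2 h3
  rcases Int.eq_one_or_neg_one_of_mul_eq_one' (sub_eq_zero.1 h0) with ⟨rfl, rfl⟩ | ⟨rfl, rfl⟩
  · exact (by decide +kernel : ¬IsSquare (5 : ℤ)) ⟨a - 5, by linear_combination h2 - a * h3⟩
  · linarith

lemma quartic_int_monic : (X ^ 4 + 10 * X ^ 3 + 22 * X ^ 2 + 10 * X + 1 : ℤ[X]).Monic := by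
  monicity!

lemma irreducible_quartic_int :
    Irreducible (X ^ 4 + 10 * X ^ 3 + 22 * X ^ 2 + 10 * X + 1 : ℤ[X]) := by
  have hdeg : (X ^ 4 + 10 * X ^ 3 + 22 * X ^ 2 + 10 * X + 1 : ℤ[X]).natDegree = 4 := by
    compute_degree!
  refine quartic_int_monic.irreducible_iff_natDegree'.2 ⟨fun h => by simp [h] at hdeg, ?_⟩
  intro f g hf hg hfg hg_deg
  rw [hdeg, Finset.mem_Ioc] at hg_deg
  obtain hg1 | hg2 : g.natDegree = 1 ∨ g.natDegree = 2 := by omega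
  · apply quartic_int_ne_zero (-g.coeff 0)
    have hroot := congrArg (eval (-g.coeff 0)) hfg
    rw [hg.eq_X_add_C hg1] at hroot
    simpa using hroot.symm
  · have hf2 : f.natDegree = 2 := by
      have hdeg_mul := hf.natDegree_mul hg
      rw [hfg, hdeg, hg2] at hdeg_mul
      omega
    rw [hf.eq_X_sq_add_C_mul_X_add_C hf2, hg.eq_X_sq_add_C_mul_X_add_C hg2] at hfg
    exact quartic_int_ne_quadratic_mul_quadratic _ _ _ _ hfg

lemma irreducible_quartic_rat :
    Irreducible (X ^ 4 + 10 * X ^ 3 + 22 * X ^ 2 + 10 * X + 1 : ℚ[X]) := by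
  simpa using (quartic_int_monic.irreducible_iff_irreducible_map_fraction_map (K := ℚ)).1
    irreducible_quartic_int

open Polynomial in
/-- `t⁴ + 10t³ + 22t² + 10t + 1` has four real roots with pairwise distinct
absolute values, and is irreducible over `ℚ`. -/
theorem galois_pinching_poly_Q5m1 :
    (∃ r : Fin 4 → ℝ, (Function.Injective fun i => |r i|) ∧
        Polynomial.map (algebraMap ℚ ℝ)
            (X ^ 4 + 10 * X ^ 3 + 22 * X ^ 2 + 10 * X + 1 : ℚ[X]) =
          ∏ i : Fin 4, (X - C (r i))) ∧
      Irreducible (X ^ 4 + 10 * X ^ 3 + 22 * X ^ 2 + 10 * X + 1 : ℚ[X]) := by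
  refine ⟨⟨quarticRoots, fun i j hij => quarticRoots_strictMono.injective ?_,
    map_quartic_eq_prod_quarticRoots⟩, irreducible_quartic_rat⟩
  simpa [abs_of_neg (quarticRoots_neg _)] using hij
end
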